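/- arXiv:math/0609790 — 3 statements merged into one kernel-verified Lean document; each statement's English description precedes it below -/
import Mathlib

section
/- Let g be a Lie algebra graded by the Klein four-group with components g_e, g_a, g_b, g_c, and let U = [g_a,g_a] + [g_b,g_b] + [g_c,g_c]. Then I = U ⊕ g_a ⊕ g_b ⊕ g_c is an ideal of g. -/
/-!
Let `Γ` be a group in which every element has order dividing two. For homogeneous `x ∈ g γ` and
`y ∈ g α` with `α ≠ 0`, either `γ + α ≠ 0`, so `⁅x, y⁆` lies in a component of nonzero degree, or
`γ = α` and `⁅x, y⁆ ∈ [g α, g α]`. A generator `⁅u, v⁆` of `[g α, g α]` has degree `α + α = 0`, so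
bracketing it with `x ∈ g γ` lands in `g γ` when `γ ≠ 0`, and in `[g α, g α]` by the Leibniz rule
when `γ = 0`.
-/

open Submodule

section

variable {k L Γ : Type*} [CommRing k] [LieRing L] [LieAlgebra k L] [AddMonoid Γ]

def bracketSpan (p : Submodule k L) : Submodule k L :=
  span k {z : L | ∃ x ∈ p, ∃ y ∈ p, z = ⁅x, y⁆}

theorem lie_mem_bracketSpan {p : Submodule k L} {x y : L} (hx : x ∈ p) (hy : y ∈ p) :
    ⁅x, y⁆ ∈ bracketSpan p :=
  subset_span ⟨x, hx, y, hy, rfl⟩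

def nonzeroDegreeIdeal (g : Γ → Submodule k L) : Submodule k L :=
  (⨆ α ≠ 0, bracketSpan (g α)) ⊔ ⨆ α ≠ 0, g α

variable {g : Γ → Submodule k L}

theorem mem_nonzeroDegreeIdeal_of_mem {α : Γ} (hα : α ≠ 0) {x : L} (hx : x ∈ g α) :
    x ∈ nonzeroDegreeIdeal g :=
  mem_sup_right (le_iSup₂ (f := fun α (_ : α ≠ 0) => g α) α hα hx)

theorem lie_mem_nonzeroDegreeIdeal {α : Γ} (hα : α ≠ 0) {x y : L} (hx : x ∈ g α)
    (hy : y ∈ g α) : ⁅x, y⁆ ∈ nonzeroDegreeIdeal g :=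
  mem_sup_left (le_iSup₂ (f := fun α (_ : α ≠ 0) => bracketSpan (g α)) α hα
    (lie_mem_bracketSpan hx hy))

theorem eq_of_add_eq_zero_of_add_self {γ α : Γ} (hα : α + α = 0) (h : γ + α = 0) : γ = α :=
  calc γ = γ + (α + α) := by rw [hα, add_zero]
    _ = α := by rw [← add_assoc, h, zero_add]

variable (hΓ : ∀ α : Γ, α + α = 0)
  (hgrad : ∀ γ₁ γ₂, ∀ x ∈ g γ₁, ∀ y ∈ g γ₂, ⁅x, y⁆ ∈ g (γ₁ + γ₂))
include hΓ hgrad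

theorem lie_homogeneous_mem_nonzeroDegreeIdeal {γ α : Γ} (hα : α ≠ 0) {x y : L}
    (hx : x ∈ g γ) (hy : y ∈ g α) : ⁅x, y⁆ ∈ nonzeroDegreeIdeal g := by
  by_cases hγα : γ + α = 0
  · obtain rfl := eq_of_add_eq_zero_of_add_self (hΓ α) hγα
    exact lie_mem_nonzeroDegreeIdeal hα hx hy
  · exact mem_nonzeroDegreeIdeal_of_mem hγα (hgrad γ α x hx y hy)

theorem lie_homogeneous_lie_mem_nonzeroDegreeIdeal {γ α : Γ} (hα : α ≠ 0) {x u v : L}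
    (hx : x ∈ g γ) (hu : u ∈ g α) (hv : v ∈ g α) : ⁅x, ⁅u, v⁆⁆ ∈ nonzeroDegreeIdeal g := by
  by_cases hγ : γ = 0
  · subst hγ
    have hxu : ⁅x, u⁆ ∈ g α := by simpa using hgrad 0 α x hx u hu
    have hxv : ⁅x, v⁆ ∈ g α := by simpa using hgrad 0 α x hx v hv
    rw [leibniz_lie]
    exact add_mem (lie_mem_nonzeroDegreeIdeal hα hxu hv) (lie_mem_nonzeroDegreeIdeal hα hu hxv)
  · have huv : ⁅u, v⁆ ∈ g 0 := hΓ α ▸ hgrad α α u hu v hv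
    exact mem_nonzeroDegreeIdeal_of_mem hγ (by simpa using hgrad γ 0 x hx _ huv)

theorem nonzeroDegreeIdeal_le_comap_ad_of_mem {γ : Γ} {x : L} (hx : x ∈ g γ) :
    nonzeroDegreeIdeal g ≤ (nonzeroDegreeIdeal g).comap (LieAlgebra.ad k L x) := by
  refine sup_le (iSup₂_le fun α hα => ?_) (iSup₂_le fun α hα => ?_)
  · rw [bracketSpan, span_le]
    rintro _ ⟨u, hu, v, hv, rfl⟩
    exact lie_homogeneous_lie_mem_nonzeroDegreeIdeal hΓ hgrad hα hx hu hv
  · exact fun y hy => lie_homogeneous_mem_nonzeroDegreeIdeal hΓ hgrad hα hx hy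

theorem lie_mem_nonzeroDegreeIdeal_of_iSup_eq_top (htop : iSup g = ⊤) (x : L) {y : L}
    (hy : y ∈ nonzeroDegreeIdeal g) : ⁅x, y⁆ ∈ nonzeroDegreeIdeal g := by
  have hx : x ∈ iSup g := htop ▸ mem_top
  induction hx using iSup_induction' with
  | mem γ x hx => exact nonzeroDegreeIdeal_le_comap_ad_of_mem hΓ hgrad hx hy
  | zero => simp
  | add x₁ x₂ _ _ h₁ h₂ => simpa only [add_lie] using add_mem h₁ h₂

end

theorem iSup_ne_zero_zmod_two_prod {α : Type*} [CompleteLattice α] (f : ZMod 2 × ZMod 2 → α) :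
    ⨆ γ ≠ 0, f γ = f (1, 0) ⊔ f (0, 1) ⊔ f (1, 1) := by
  refine le_antisymm (iSup₂_le fun γ hγ => ?_) (sup_le (sup_le ?_ ?_) ?_)
  · obtain rfl | rfl | rfl : γ = (1, 0) ∨ γ = (0, 1) ∨ γ = (1, 1) := by revert γ; decide
    · exact le_sup_left.trans le_sup_left
    · exact le_sup_right.trans le_sup_left
    · exact le_sup_right
  all_goals exact le_iSup₂_of_le _ (by decide) le_rfl

/-- For a Lie algebra `L` graded by the Klein four-group
(`e = (0,0)`, `a = (1,0)`, `b = (0,1)`, `c = (1,1)` in `ZMod 2 × ZMod 2`),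
with `U = [g_a,g_a] + [g_b,g_b] + [g_c,g_c]`, the subspace
`I = U ⊕ g_a ⊕ g_b ⊕ g_c` is an ideal of `L`. -/
theorem klein_grading_ideal
    (k : Type*) [Field k] (L : Type*) [LieRing L] [LieAlgebra k L]
    (g : ZMod 2 × ZMod 2 → Submodule k L)
    (hdecomp : DirectSum.IsInternal g)
    (hgrad : ∀ γ₁ γ₂, ∀ x ∈ g γ₁, ∀ y ∈ g γ₂, ⁅x, y⁆ ∈ g (γ₁ + γ₂))
    (U I : Submodule k L)
    (hU : U = Submodule.span k {z : L | ∃ x ∈ g (1,0), ∃ y ∈ g (1,0), z = ⁅x, y⁆} ⊔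
      Submodule.span k {z : L | ∃ x ∈ g (0,1), ∃ y ∈ g (0,1), z = ⁅x, y⁆} ⊔
      Submodule.span k {z : L | ∃ x ∈ g (1,1), ∃ y ∈ g (1,1), z = ⁅x, y⁆})
    (hI : I = U ⊔ g (1,0) ⊔ g (0,1) ⊔ g (1,1)) :
    ∀ x : L, ∀ y ∈ I, ⁅x, y⁆ ∈ I := by
  have hI' : I = nonzeroDegreeIdeal g := by
    rw [hI, hU, nonzeroDegreeIdeal, iSup_ne_zero_zmod_two_prod, iSup_ne_zero_zmod_two_prod]
    simp only [bracketSpan, sup_assoc]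
  subst hI'
  exact lie_mem_nonzeroDegreeIdeal_of_iSup_eq_top (fun α => by revert α; decide) hgrad
    hdecomp.submodule_iSup_eq_top
end

section
/- Let B be a symmetric bilinear form on the subspace m = g_a ⊕ g_b ⊕ g_c of so(5) (with g_a = span{A₁,A₂,A₃,A₄}, g_b = span{B₁,B₂}, g_c = span{C₁,C₂}) satisfying B([X,Y],Z) + B(Y,[X,Z]) = 0 for all X ∈ g_e = span{X₁,X₂} and Y, Z ∈ m, and such that g_a, g_b, g_c are pairwise B-orthogonal. Then there exist real numbers t, u, v, w with B = t(α₁²+α₂²+α₃²+α₄²) + u(α₁α₄ − α₂α₃) + v(β₁²+β₂²) + w(γ₁²+γ₂²), where {αᵢ, βᵢ, γᵢ} is the dual basis of {Aᵢ, Bᵢ, Cᵢ}. -/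
open Matrix

/-- Elementary skew-symmetric matrix: `1` at `(i,j)`, `-1` at `(j,i)` (0-based indices). -/
def E (i j : Fin 5) : Matrix (Fin 5) (Fin 5) ℝ :=
  Matrix.single i j 1 - Matrix.single j i 1

/-- `g_e = span{X₁ = E 0 1, X₂ = E 2 3}`. -/
noncomputable def ge : Submodule ℝ (Matrix (Fin 5) (Fin 5) ℝ) :=
  Submodule.span ℝ {E 0 1, E 2 3}

/-- `g_a = span{A₁ = E 0 2, A₂ = E 0 3, A₃ = E 1 2, A₄ = E 1 3}`. -/
noncomputable def ga : Submodule ℝ (Matrix (Fin 5) (Fin 5) ℝ) :=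
  Submodule.span ℝ {E 0 2, E 0 3, E 1 2, E 1 3}

/-- `g_b = span{B₁ = E 0 4, B₂ = E 1 4}`. -/
noncomputable def gb : Submodule ℝ (Matrix (Fin 5) (Fin 5) ℝ) :=
  Submodule.span ℝ {E 0 4, E 1 4}

/-- `g_c = span{C₁ = E 2 4, C₂ = E 3 4}`. -/
noncomputable def gc : Submodule ℝ (Matrix (Fin 5) (Fin 5) ℝ) :=
  Submodule.span ℝ {E 2 4, E 3 4}

/-! `ad X₁` (with `X₁ = E 0 1`) rotates each of the coordinate planes `span {A₁, A₃}`,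
`span {A₂, A₄}`, `span {B₁, B₂}` infinitesimally, and `ad X₂` (with `X₂ = E 2 3`) rotates
`span {A₁, A₂}`, `span {A₃, A₄}`, `span {C₁, C₂}`. A symmetric form that is invariant under an
infinitesimal rotation of a plane is a multiple of the Euclidean form there, and on two planes
rotated simultaneously it intertwines the two rotations. On the six planes this forces the diagonal
entries to agree within `g_a`, `g_b`, `g_c` and all other entries to vanish except
`B(A₁, A₄) = -B(A₂, A₃)`. -/

theorem Matrix.single_mul_single_eq_ite {n α : Type*} [Fintype n] [DecidableEq n] [Semiring α]
    (i j k l : n) (a b : α) :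
    single i j a * single k l b = if j = k then single i l (a * b) else 0 := by
  split_ifs with h
  · subst h
    exact single_mul_single_same ..
  · simp [h]

theorem lie_E_E (i j k l : Fin 5) :
    ⁅E i j, E k l⁆ = (if j = k then E i l else 0) - (if i = k then E j l else 0)
      - (if j = l then E i k else 0) + (if i = l then E j k else 0) := by
  simp only [E, Ring.lie_def, sub_mul, mul_sub, single_mul_single_eq_ite, mul_one]
  split_ifs <;> subst_vars <;> first | contradiction | abel_nf

theorem neg_E (i j : Fin 5) : -E i j = E j i := by
  simp [E]

theorem sup_ga_gb_gc_eq_span : ga ⊔ gb ⊔ gc =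
    Submodule.span ℝ {E 0 2, E 0 3, E 1 2, E 1 3, E 0 4, E 1 4, E 2 4, E 3 4} := by
  simp only [ga, gb, gc, ← Submodule.span_union, Set.insert_union, Set.singleton_union]

section AdRotates

variable {K L : Type*} [CommRing K] [AddCommGroup L] [Module K L] [Bracket L L]
  (B : L →ₗ[K] L →ₗ[K] K) {m : Submodule K L} {x e f e' f' : L}

def AdRotates (x e f : L) : Prop := ⁅x, e⁆ = -f ∧ ⁅x, f⁆ = e

theorem AdRotates.apply_eq_and_apply_eq_neg
    (hinv : ∀ y ∈ m, ∀ z ∈ m, B ⁅x, y⁆ z + B y ⁅x, z⁆ = 0)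
    (h : AdRotates x e f) (h' : AdRotates x e' f') (he : e ∈ m) (he' : e' ∈ m) (hf' : f' ∈ m) :
    B e e' = B f f' ∧ B f e' = -B e f' := by
  have hee' := hinv e he e' he'
  have hef' := hinv e he f' hf'
  rw [h.1, h'.1] at hee'
  rw [h.1, h'.2] at hef'
  simp only [map_neg, LinearMap.neg_apply] at hee' hef'
  exact ⟨by linear_combination hef', by linear_combination -hee'⟩

theorem AdRotates.apply_self_eq_and_apply_eq_zero [NoZeroDivisors K] [NeZero (2 : K)]
    (hsym : ∀ y z, B y z = B z y) (hinv : ∀ y ∈ m, ∀ z ∈ m, B ⁅x, y⁆ z + B y ⁅x, z⁆ = 0)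
    (h : AdRotates x e f) (he : e ∈ m) (hf : f ∈ m) :
    B e e = B f f ∧ B e f = 0 := by
  obtain ⟨hself, hskew⟩ := h.apply_eq_and_apply_eq_neg B hinv h he he hf
  refine ⟨hself, ?_⟩
  have h2 : 2 * B e f = 0 := by linear_combination hsym e f + hskew
  simpa [two_ne_zero] using h2

end AdRotates

theorem invariant_form_on_flag_so5_general
    (B : Matrix (Fin 5) (Fin 5) ℝ →ₗ[ℝ] Matrix (Fin 5) (Fin 5) ℝ →ₗ[ℝ] ℝ)
    (hsym : ∀ X Y, B X Y = B Y X)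
    (hinv : ∀ X ∈ ge, ∀ Y ∈ ga ⊔ gb ⊔ gc, ∀ Z ∈ ga ⊔ gb ⊔ gc,
      B ⁅X, Y⁆ Z + B Y ⁅X, Z⁆ = 0) :
    ∃ t u v w : ℝ,
      B (E 0 2) (E 0 2) = t ∧ B (E 0 3) (E 0 3) = t ∧
      B (E 1 2) (E 1 2) = t ∧ B (E 1 3) (E 1 3) = t ∧
      B (E 0 2) (E 1 3) = u ∧ B (E 0 3) (E 1 2) = -u ∧
      B (E 0 2) (E 0 3) = 0 ∧ B (E 0 2) (E 1 2) = 0 ∧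
      B (E 0 3) (E 1 3) = 0 ∧ B (E 1 2) (E 1 3) = 0 ∧
      B (E 0 4) (E 0 4) = v ∧ B (E 1 4) (E 1 4) = v ∧ B (E 0 4) (E 1 4) = 0 ∧
      B (E 2 4) (E 2 4) = w ∧ B (E 3 4) (E 3 4) = w ∧ B (E 2 4) (E 3 4) = 0 := by
  have mem {y} (hy : y ∈ ({E 0 2, E 0 3, E 1 2, E 1 3, E 0 4, E 1 4, E 2 4, E 3 4} : Set _)) :
      y ∈ ga ⊔ gb ⊔ gc :=
    sup_ga_gb_gc_eq_span ▸ Submodule.subset_span hy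
  have inv₁ := hinv (E 0 1) (Submodule.subset_span (by simp))
  have inv₂ := hinv (E 2 3) (Submodule.subset_span (by simp))
  have rA₁₃ : AdRotates (E 0 1) (E 0 2) (E 1 2) := by simp [AdRotates, lie_E_E, neg_E]
  have rA₂₄ : AdRotates (E 0 1) (E 0 3) (E 1 3) := by simp [AdRotates, lie_E_E, neg_E]
  have rB : AdRotates (E 0 1) (E 0 4) (E 1 4) := by simp [AdRotates, lie_E_E, neg_E]
  have rA₁₂ : AdRotates (E 2 3) (E 0 2) (E 0 3) := by simp [AdRotates, lie_E_E, neg_E]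
  have rA₃₄ : AdRotates (E 2 3) (E 1 2) (E 1 3) := by simp [AdRotates, lie_E_E, neg_E]
  have rC : AdRotates (E 2 3) (E 2 4) (E 3 4) := by simp [AdRotates, lie_E_E, neg_E]
  obtain ⟨hA₁₃, hA₁₃'⟩ := rA₁₃.apply_self_eq_and_apply_eq_zero B hsym inv₁
    (mem (by simp)) (mem (by simp))
  obtain ⟨hA₂₄, hA₂₄'⟩ := rA₂₄.apply_self_eq_and_apply_eq_zero B hsym inv₁
    (mem (by simp)) (mem (by simp))
  obtain ⟨hB, hB'⟩ := rB.apply_self_eq_and_apply_eq_zero B hsym inv₁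
    (mem (by simp)) (mem (by simp))
  obtain ⟨hA₁₂, hA₁₂'⟩ := rA₁₂.apply_self_eq_and_apply_eq_zero B hsym inv₂
    (mem (by simp)) (mem (by simp))
  obtain ⟨hA₃₄, hA₃₄'⟩ := rA₃₄.apply_self_eq_and_apply_eq_zero B hsym inv₂
    (mem (by simp)) (mem (by simp))
  obtain ⟨hC, hC'⟩ := rC.apply_self_eq_and_apply_eq_zero B hsym inv₂
    (mem (by simp)) (mem (by simp))
  obtain ⟨-, hu⟩ := rA₁₃.apply_eq_and_apply_eq_neg B inv₁ rA₂₄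
    (mem (by simp)) (mem (by simp)) (mem (by simp))
  exact ⟨_, _, _, _, rfl, hA₁₂.symm, hA₁₃.symm, (hA₁₂.trans hA₂₄).symm, rfl, hsym _ _ ▸ hu,
    hA₁₂', hA₁₃', hA₂₄', hA₃₄', rfl, hB.symm, hB', rfl, hC.symm, hC'⟩

/-- Any symmetric bilinear form `B` on `m = g_a ⊕ g_b ⊕ g_c ⊆ so(5)` which is
`ad(g_e)`-invariant and for which `g_a, g_b, g_c` are pairwise orthogonal is of the form
`B = t(α₁²+α₂²+α₃²+α₄²) + u(α₁α₄ - α₂α₃) + v(β₁²+β₂²) + w(γ₁²+γ₂²)`;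
equivalently, its values on the basis `{A₁,A₂,A₃,A₄,B₁,B₂,C₁,C₂}` are as listed below. -/
theorem invariant_form_on_flag_so5
    (B : Matrix (Fin 5) (Fin 5) ℝ →ₗ[ℝ] Matrix (Fin 5) (Fin 5) ℝ →ₗ[ℝ] ℝ)
    (hsym : ∀ X Y, B X Y = B Y X)
    (hinv : ∀ X ∈ ge, ∀ Y ∈ ga ⊔ gb ⊔ gc, ∀ Z ∈ ga ⊔ gb ⊔ gc,
      B ⁅X, Y⁆ Z + B Y ⁅X, Z⁆ = 0)
    (hab : ∀ X ∈ ga, ∀ Y ∈ gb, B X Y = 0)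
    (hac : ∀ X ∈ ga, ∀ Y ∈ gc, B X Y = 0)
    (hbc : ∀ X ∈ gb, ∀ Y ∈ gc, B X Y = 0) :
    ∃ t u v w : ℝ,
      B (E 0 2) (E 0 2) = t ∧ B (E 0 3) (E 0 3) = t ∧
      B (E 1 2) (E 1 2) = t ∧ B (E 1 3) (E 1 3) = t ∧
      B (E 0 2) (E 1 3) = u ∧ B (E 0 3) (E 1 2) = -u ∧
      B (E 0 2) (E 0 3) = 0 ∧ B (E 0 2) (E 1 2) = 0 ∧
      B (E 0 3) (E 1 3) = 0 ∧ B (E 1 2) (E 1 3) = 0 ∧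
      B (E 0 4) (E 0 4) = v ∧ B (E 1 4) (E 1 4) = v ∧ B (E 0 4) (E 1 4) = 0 ∧
      B (E 2 4) (E 2 4) = w ∧ B (E 3 4) (E 3 4) = w ∧ B (E 2 4) (E 3 4) = 0 :=
  invariant_form_on_flag_so5_general B hsym hinv
end

section
/- Let h = so(r₁) act on the space M(r₁, r₂) of r₁×r₂ real matrices by X · A = XA, with r₁ ≥ 3. If B is a symmetric bilinear form on M(r₁,r₂) that is invariant, i.e. B(XA, A') + B(A, XA') = 0 for all X ∈ so(r₁) and A, A' ∈ M(r₁,r₂), and also invariant under the right action of so(r₂) (B(AY, A') + B(A, A'Y) = 0), then B is a scalar multiple of the trace form B(A,A') = tr(Aᵀ A'). -/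
/-!
Test `B` on the elementary matrices `E i j = single i j 1`. The skew matrix `E a b - E b a`
of `so(m)` moves row indices: `(E i x - E x i) * E x j = E i j`, and it kills `E k l` when `x`
differs from `i` and `k`, so left invariance gives `B (E i j) (E k l) = 0` for `i ≠ k` once a
third row index `x` exists, and shows that `B (E i j) (E i l)` does not depend on `i`. The same
argument on columns gives `B (E i j) (E i l) + B (E i l) (E i j) = 0` for `j ≠ l`, hence `0` by
symmetry, and shows that `B (E i j) (E i j)` does not depend on `j`. So
`B (E i j) (E k l) = c δᵢₖ δⱼₗ`, which is `c` times the trace form on the basis `E i j`.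
-/

open Matrix

namespace Matrix

variable {R m n : Type*} [CommRing R] [DecidableEq m] [DecidableEq n]

def IsLeftSkewInvariant [Fintype m] (B : Matrix m n R →ₗ[R] Matrix m n R →ₗ[R] R) : Prop :=
  ∀ X : Matrix m m R, Xᵀ = -X → ∀ A A', B (X * A) A' + B A (X * A') = 0

def IsRightSkewInvariant [Fintype n] (B : Matrix m n R →ₗ[R] Matrix m n R →ₗ[R] R) : Prop :=
  ∀ Y : Matrix n n R, Yᵀ = -Y → ∀ A A', B (A * Y) A' + B A (A' * Y) = 0

lemma transpose_single_sub_single (a b : m) :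
    (single a b (1 : R) - single b a 1)ᵀ = -(single a b 1 - single b a 1) := by
  rw [transpose_sub, transpose_single, transpose_single, neg_sub]

variable {B : Matrix m n R →ₗ[R] Matrix m n R →ₗ[R] R}

section Left

variable [Fintype m]

lemma IsLeftSkewInvariant.apply_single_single_eq_zero (hB : IsLeftSkewInvariant B)
    {i k x : m} (hik : i ≠ k) (hxi : x ≠ i) (hxk : x ≠ k) (j l : n) :
    B (single i j 1) (single k l 1) = 0 := by
  simpa [Matrix.sub_mul, single_mul_single_of_ne, hik, hxi.symm, hxk] using
    hB _ (transpose_single_sub_single i x) (single x j 1) (single k l 1)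

lemma IsLeftSkewInvariant.apply_single_single_same_eq (hB : IsLeftSkewInvariant B)
    (a b : m) (j l : n) :
    B (single a j 1) (single a l 1) = B (single b j 1) (single b l 1) := by
  obtain rfl | hab := eq_or_ne a b
  · rfl
  have h := hB _ (transpose_single_sub_single a b) (single b j 1) (single a l 1)
  simp only [Matrix.sub_mul, single_mul_single_same, single_mul_single_of_ne, ne_eq, hab,
    hab.symm, not_false_eq_true, mul_one, sub_zero, zero_sub, map_neg] at h
  linear_combination h

end Left

section Right

variable [Fintype n]

lemma IsRightSkewInvariant.apply_single_single_self_eq (hB : IsRightSkewInvariant B)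
    (i : m) (j l : n) :
    B (single i j 1) (single i j 1) = B (single i l 1) (single i l 1) := by
  obtain rfl | hjl := eq_or_ne j l
  · rfl
  have h := hB _ (transpose_single_sub_single j l) (single i j 1) (single i l 1)
  simp only [Matrix.mul_sub, single_mul_single_same, single_mul_single_of_ne, ne_eq, hjl,
    hjl.symm, not_false_eq_true, mul_one, sub_zero, zero_sub, map_neg] at h
  linear_combination -h

lemma IsRightSkewInvariant.apply_single_single_eq_zero [NoZeroDivisors R] [CharZero R]
    (hB : IsRightSkewInvariant B) (hsym : ∀ A A', B A A' = B A' A)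
    (i : m) {j l : n} (hjl : j ≠ l) :
    B (single i j 1) (single i l 1) = 0 := by
  have h := hB _ (transpose_single_sub_single j l) (single i j 1) (single i j 1)
  simp only [Matrix.mul_sub, single_mul_single_same, single_mul_single_of_ne, ne_eq, hjl,
    not_false_eq_true, mul_one, sub_zero] at h
  rwa [hsym, add_self_eq_zero] at h

end Right

lemma exists_apply_single_single_eq_ite [Fintype m] [Fintype n] [NoZeroDivisors R] [CharZero R]
    (hm : 3 ≤ Fintype.card m) (hsym : ∀ A A', B A A' = B A' A)
    (hleft : IsLeftSkewInvariant B) (hright : IsRightSkewInvariant B) :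
    ∃ c : R, ∀ i j k l, B (single i j 1) (single k l 1) = if i = k ∧ j = l then c else 0 := by
  obtain _ | ⟨⟨i₀, j₀⟩⟩ := isEmpty_or_nonempty (m × n)
  · exact ⟨0, fun i j => isEmptyElim (i, j)⟩
  refine ⟨B (single i₀ j₀ 1) (single i₀ j₀ 1), fun i j k l => ?_⟩
  obtain rfl | hik := eq_or_ne i k
  · obtain rfl | hjl := eq_or_ne j l
    · rw [if_pos ⟨rfl, rfl⟩, hleft.apply_single_single_same_eq i i₀,
        hright.apply_single_single_self_eq i₀ j j₀]
    · rw [if_neg (by tauto), hright.apply_single_single_eq_zero hsym i hjl]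
  · obtain ⟨x, hxi, hxk⟩ := Cardinal.exists_ne_ne_of_three_le (by simpa using hm) i k
    rw [if_neg (by tauto), hleft.apply_single_single_eq_zero hik hxi hxk]

variable (R m n) in
def traceForm [Fintype m] [Fintype n] : Matrix m n R →ₗ[R] Matrix m n R →ₗ[R] R :=
  LinearMap.mk₂ R (fun A A' => trace (Aᵀ * A'))
    (by simp [Matrix.add_mul, trace_add]) (by simp [trace_smul])
    (by simp [Matrix.mul_add, trace_add]) (by simp [trace_smul])

lemma eq_smul_traceForm_of_apply_single_single [Fintype m] [Fintype n] {c : R}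
    (h : ∀ i j k l, B (single i j 1) (single k l 1) = if i = k ∧ j = l then c else 0) :
    B = c • traceForm R m n := by
  refine LinearMap.ext_basis (stdBasis R m n) (stdBasis R m n) fun ⟨i, j⟩ ⟨k, l⟩ => ?_
  simp only [stdBasis_eq_single, h, traceForm, LinearMap.smul_apply, LinearMap.mk₂_apply,
    transpose_single, smul_eq_mul]
  obtain rfl | hik := eq_or_ne i k
  · obtain rfl | hjl := eq_or_ne j l
    · simp
    · simp [hjl, trace_single_eq_of_ne]
  · simp [hik]

end Matrix

/-- Let `so(r₁)` act on the left and `so(r₂)` on the right of the space of `r₁ × r₂`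
real matrices, with `r₁ ≥ 3`.  Any symmetric bilinear form `B` invariant under both
actions is a scalar multiple of the trace form `(A, A') ↦ tr (Aᵀ * A')`. -/
theorem invariant_form_is_trace_form
    (r₁ r₂ : ℕ) (hr₁ : 3 ≤ r₁)
    (B : Matrix (Fin r₁) (Fin r₂) ℝ →ₗ[ℝ] Matrix (Fin r₁) (Fin r₂) ℝ →ₗ[ℝ] ℝ)
    (hsym : ∀ A A', B A A' = B A' A)
    (hleft : ∀ X : Matrix (Fin r₁) (Fin r₁) ℝ, Xᵀ = -X →
      ∀ A A', B (X * A) A' + B A (X * A') = 0)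
    (hright : ∀ Y : Matrix (Fin r₂) (Fin r₂) ℝ, Yᵀ = -Y →
      ∀ A A', B (A * Y) A' + B A (A' * Y) = 0) :
    ∃ c : ℝ, ∀ A A', B A A' = c * Matrix.trace (Aᵀ * A') := by
  obtain ⟨c, hc⟩ :=
    exists_apply_single_single_eq_ite (by simpa using hr₁) hsym hleft hright
  refine ⟨c, fun A A' => ?_⟩
  rw [eq_smul_traceForm_of_apply_single_single hc]
  rfl
end
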